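/- In the DTMC with states q₁, q₂, q₃, transitions δ(q₁)(q₂) = 1, δ(q₂)(q₁) = 1−ε, δ(q₂)(q₃) = ε (where 0 < ε < 1), initial state q₁, and P holding only at q₃: the measure of the set of paths of the form (q₁q₂)^k q₃ for 1 ≤ k ≤ n equals 1 − (1−ε)^n; consequently, for 0 < δ < 1 any finite set of finite paths reaching q₃ whose total measure exceeds 1 − δ must contain at least log δ / log(1−ε) paths. -/
import Mathlib


noncomputable section

/-- One-step transition probabilities of the DTMC: `q₁ → q₂` with probability `1`,
`q₂ → q₁` with probability `1 - ε`, `q₂ → q₃` with probability `ε` (states `0, 1, 2`). -/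
def tMat (e : ℝ) : Fin 3 → Fin 3 → ℝ := fun a b =>
  if a = 0 ∧ b = 1 then 1
  else if a = 1 ∧ b = 0 then 1 - e
  else if a = 1 ∧ b = 2 then e
  else 0

/-- The measure of a finite path: the product of one-step transition probabilities. -/
def pathMeasure (e : ℝ) : List (Fin 3) → ℝ
  | [] => 1
  | [_] => 1
  | a :: b :: l => tMat e a b * pathMeasure e (b :: l)

/-- The path `(q₁ q₂)^k q₃`. -/
def pathK (k : ℕ) : List (Fin 3) :=
  (List.replicate k ([0, 1] : List (Fin 3))).flatten ++ [2]

lemma pathK_succ (k : ℕ) : pathK (k + 1) = 0 :: 1 :: pathK k := by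
  simp [pathK, List.replicate_succ]

lemma meas_succ (e : ℝ) (k : ℕ) :
    pathMeasure e (pathK (k + 1)) = (1 - e) ^ k * e := by
  induction k with
  | zero => simp [pathK_succ, pathK, pathMeasure, tMat]
  | succ k ih =>
      rw [pathK_succ, pathK_succ] at *
      simp only [pathMeasure, tMat] at *
      norm_num at *
      rw [ih]; ring

lemma sum_icc (e : ℝ) (n : ℕ) :
    ∑ k ∈ Finset.Icc 1 n, pathMeasure e (pathK k) = 1 - (1 - e) ^ n := by
  induction n with
  | zero => simp
  | succ n ih =>
      rw [Finset.sum_Icc_succ_top (by omega), ih, meas_succ]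
      ring

lemma sum_shift (g : ℕ → ℝ) (n : ℕ) :
    ∑ k ∈ Finset.Icc 1 n, g k = ∑ i ∈ Finset.range n, g (i + 1) := by
  induction n with
  | zero => simp
  | succ n ih =>
      rw [Finset.sum_Icc_succ_top (by omega), Finset.sum_range_succ, ih]

/-- The total measure of the paths `(q₁q₂)^k q₃` for `1 ≤ k ≤ n` is `1 - (1-ε)^n`;
consequently any finite set of such paths of total measure exceeding `1 - δ` contains at
least `log δ / log (1-ε)` paths. -/
theorem stmt11 (e d : ℝ) (he0 : 0 < e) (he1 : e < 1) (hd0 : 0 < d) (hd1 : d < 1) :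
    (∀ n : ℕ, ∑ k ∈ Finset.Icc 1 n, pathMeasure e (pathK k) = 1 - (1 - e) ^ n) ∧
    (∀ F : Finset ℕ, (∀ k ∈ F, 1 ≤ k) →
      1 - d < ∑ k ∈ F, pathMeasure e (pathK k) →
      Real.log d / Real.log (1 - e) ≤ (F.card : ℝ)) := by
  have h1e0 : 0 < 1 - e := by linarith
  have h1e1 : 1 - e < 1 := by linarith
  refine ⟨sum_icc e, fun F hF hlt => ?_⟩
  set N := F.card with hN
  have key : ∑ k ∈ F, pathMeasure e (pathK k) ≤ 1 - (1 - e) ^ N := by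
    rw [← sum_icc e N]
    set emb := F.orderEmbOfFin hN.symm with hemb
    have hsumF : ∑ k ∈ F, pathMeasure e (pathK k)
        = ∑ i : Fin N, pathMeasure e (pathK (emb i)) := by
      refine (Finset.sum_bij (fun i _ => emb i) (fun i _ => F.orderEmbOfFin_mem _ i)
        (fun i _ j _ h => emb.injective h) (fun b hb => ?_) (fun i _ => rfl)).symm
      have hb' : b ∈ Set.range emb := by
        rw [hemb, F.range_orderEmbOfFin hN.symm]; exact hb
      obtain ⟨i, hi⟩ := hb'
      exact ⟨i, Finset.mem_univ i, hi⟩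
    have hsumI : ∑ k ∈ Finset.Icc 1 N, pathMeasure e (pathK k)
        = ∑ i : Fin N, pathMeasure e (pathK (i + 1)) := by
      rw [sum_shift, Finset.sum_range fun i => pathMeasure e (pathK (i + 1))]
    rw [hsumF, hsumI]
    apply Finset.sum_le_sum
    intro i _
    have hge' : ∀ j : ℕ, ∀ h : j < N, j + 1 ≤ emb ⟨j, h⟩ := by
      intro j
      induction j with
      | zero => intro h; exact hF _ (F.orderEmbOfFin_mem _ _)
      | succ j ih =>
          intro h
          have hj : j < N := by omega
          have h2 := emb.strictMono (show (⟨j, hj⟩ : Fin N) < ⟨j + 1, h⟩ by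
            simp [Fin.lt_def])
          have := ih hj
          omega
    have hge : (i : ℕ) + 1 ≤ emb i := by
      have := hge' i i.2
      simpa using this
    obtain ⟨m, hm⟩ : ∃ m, (emb i : ℕ) = ((i : ℕ) + 1) + m :=
      ⟨emb i - ((i : ℕ) + 1), by omega⟩
    rw [hm]
    have h2 : pathMeasure e (pathK (((i : ℕ) + 1) + m)) = (1 - e) ^ ((i : ℕ) + m) * e := by
      have h4 : ((i : ℕ) + 1) + m = ((i : ℕ) + m) + 1 := by omega
      rw [h4, meas_succ]
    rw [h2, meas_succ]
    have hp : (1 - e) ^ ((i : ℕ) + m) ≤ (1 - e) ^ (i : ℕ) :=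
      pow_le_pow_of_le_one (by linarith) (by linarith) (by omega)
    nlinarith
  have hpow : (1 - e) ^ N < d := by linarith
  have hlogpow : (N : ℝ) * Real.log (1 - e) < Real.log d := by
    have := Real.log_lt_log (pow_pos h1e0 N) hpow
    rwa [Real.log_pow] at this
  have hlogneg : Real.log (1 - e) < 0 := Real.log_neg h1e0 h1e1
  rw [div_le_iff_of_neg hlogneg]
  linarith
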